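/- Under the Setup, the line L₁'' intersects the interior of the North side [AB] of ABCD and the interior of the East side [BC] of ABCD (dividing each of these two sides into two parts of positive length), and L₁'' is disjoint from the West side [AD]. -/

import Mathlib

open Real

noncomputable section

/-- Points of the Euclidean plane. -/
abbrev Pt := EuclideanSpace ℝ (Fin 2)

/-- An axis-aligned rectangle (all sides of positive length, parallel to the axes),
given by the coordinates of its sides. -/
structure AARect where
  xmin : ℝ
  xmax : ℝ
  ymin : ℝ
  ymax : ℝ
  hx : xmin < xmax
  hy : ymin < ymax

/-- The set of points of an axis-aligned rectangle. -/
def AARect.set (R : AARect) : Set Pt :=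
  {q | q 0 ∈ Set.Icc R.xmin R.xmax ∧ q 1 ∈ Set.Icc R.ymin R.ymax}

/-- The center of an axis-aligned rectangle. -/
def AARect.center (R : AARect) : Pt :=
  !₂[(R.xmin + R.xmax) / 2, (R.ymin + R.ymax) / 2]

/-- The North-West vertex `A`. -/
def AARect.A (R : AARect) : Pt := !₂[R.xmin, R.ymax]

/-- The North-East vertex `B`. -/
def AARect.B (R : AARect) : Pt := !₂[R.xmax, R.ymax]

/-- The South-East vertex `C`. -/
def AARect.C (R : AARect) : Pt := !₂[R.xmax, R.ymin]

/-- The South-West vertex `D`. -/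
def AARect.D (R : AARect) : Pt := !₂[R.xmin, R.ymin]

/-- The line through the point `p` with direction vector `v`. -/
def lineThrough (p v : Pt) : Set Pt := {q | ∃ t : ℝ, q = p + t • v}

/-- The closed half-plane to the right (East) of the (non-vertical) line through `p` with
direction `v`: the set of points having, on that line, a point with the same second
coordinate and a smaller-or-equal first coordinate. -/
def rightOf (p v : Pt) : Set Pt :=
  {q | ∃ w ∈ lineThrough p v, w 1 = q 1 ∧ w 0 ≤ q 0}

/-!
In coordinates centred at `p`, with half-sides `w, h ≥ 2`, the line `L₁` is `y = k x` with
`k < 0`, and `|Aa| < 1` reads `|h + k w| < 1`. The half-plane `H` lies above `L₁`, so `L₁''` is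
the graph `y = δ + k x` with `δ > 0`, and since it is at distance 2 from `L₁`,
`δ = 2 √(1 + k²) ∈ [2, 2 (1 - k))`. On `x = -w`, `L₁''` is at height `δ - k w > h`; on `x = w` it
is at height `δ + k w ∈ (-h, h)`; and at height `h` it is at `x = (h - δ) / k ∈ (-w, w)`.
All of these follow from `|h + k w| < 1` and `2 k ≥ k w`.
-/

theorem div_neg_of_mul_neg {a b : ℝ} (h : a * b < 0) : b / a < 0 := by
  have ha : a ≠ 0 := by rintro rfl; simp at h
  rw [← mul_div_mul_left b a ha]
  exact div_neg_of_neg_of_pos h (mul_self_pos.2 ha)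

theorem mem_lineThrough_iff {p v q : Pt} (hv : v 0 ≠ 0) :
    q ∈ lineThrough p v ↔ q 1 - p 1 = v 1 / v 0 * (q 0 - p 0) := by
  constructor
  · rintro ⟨t, rfl⟩
    simp only [PiLp.add_apply, PiLp.smul_apply, smul_eq_mul]
    field_simp
    ring
  · intro hq
    refine ⟨(q 0 - p 0) / v 0, ?_⟩
    ext i
    fin_cases i
    · simp [div_mul_cancel₀ _ hv]
    · simp only [Fin.mk_one, PiLp.add_apply, PiLp.smul_apply, smul_eq_mul]
      rw [div_mul_comm, ← hq]
      ring

theorem slope_mul_le_of_mem_rightOf {p v q : Pt} (hv : v 0 * v 1 < 0) (hq : q ∈ rightOf p v) :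
    v 1 / v 0 * (q 0 - p 0) ≤ q 1 - p 1 := by
  obtain ⟨w, hw, hwq1, hwq0⟩ := hq
  have hv0 : v 0 ≠ 0 := by rintro h; simp [h] at hv
  rw [← hwq1, (mem_lineThrough_iff hv0).1 hw]
  exact mul_le_mul_of_nonpos_left (by linarith) (div_neg_of_mul_neg hv).le

theorem sq_vertical_offset_of_inner_eq_zero {p v q : Pt} (hv : v 0 ≠ 0)
    (hperp : inner ℝ (q - p) v = 0) :
    (q 1 - p 1 - v 1 / v 0 * (q 0 - p 0)) ^ 2 = dist p q ^ 2 * (1 + (v 1 / v 0) ^ 2) := by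
  simp only [PiLp.inner_apply, Fin.sum_univ_two, PiLp.sub_apply, RCLike.inner_apply,
    conj_trivial] at hperp
  rw [EuclideanSpace.dist_sq_eq]
  simp only [Fin.sum_univ_two, Real.dist_eq, sq_abs]
  field_simp
  linear_combination (v 0 * (p 0 - q 0) + v 1 * (p 1 - q 1)) * hperp

theorem le_and_lt_of_sq_eq_sq_mul_one_add_sq {δ r k : ℝ} (hδ : 0 ≤ δ) (hr : 0 < r) (hk : k < 0)
    (h : δ ^ 2 = r ^ 2 * (1 + k ^ 2)) : r ≤ δ ∧ δ < r * (1 - k) := by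
  constructor
  · nlinarith [sq_nonneg k, mul_pos hr hr]
  · refine lt_of_pow_lt_pow_left₀ 2 (by nlinarith) ?_
    nlinarith [mul_pos (mul_pos hr hr) (neg_pos.2 hk)]

theorem graph_meets_AB_BC_not_AD (R : AARect) (h4x : 4 ≤ R.xmax - R.xmin)
    (h4y : 4 ≤ R.ymax - R.ymin) {L : Set Pt} {k δ : ℝ}
    (hL : ∀ q, q ∈ L ↔ q 1 - R.center 1 = δ + k * (q 0 - R.center 0))
    (hk : k < 0) (hδ : 2 ≤ δ) (hδk : δ < 2 * (1 - k))
    (hA : |R.ymax - R.center 1 + k * (R.center 0 - R.xmin)| < 1) :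
    (∃ f ∈ L, f 1 = R.ymax ∧ f 0 ∈ Set.Ioo R.xmin R.xmax) ∧
    (∃ j ∈ L, j 0 = R.xmax ∧ j 1 ∈ Set.Ioo R.ymin R.ymax) ∧
    (∀ q ∈ L, ¬(q 0 = R.xmin ∧ q 1 ∈ Set.Icc R.ymin R.ymax)) := by
  have hw : R.center 0 - R.xmin = R.xmax - R.center 0 := by simp [AARect.center]; ring
  have hh : R.center 1 - R.ymin = R.ymax - R.center 1 := by simp [AARect.center]; ring
  have hkw : k * (R.xmax - R.center 0) ≤ 2 * k := by nlinarith
  rw [hw, abs_lt] at hA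
  refine ⟨⟨!₂[R.center 0 + (R.ymax - R.center 1 - δ) / k, R.ymax], ?_, rfl, ?_, ?_⟩,
    ⟨!₂[R.xmax, R.center 1 + δ + k * (R.xmax - R.center 0)], ?_, rfl, ?_, ?_⟩, ?_⟩
  · rw [hL]
    simp only [Matrix.cons_val_zero, Matrix.cons_val_one]
    field_simp [hk.ne]
    ring
  · have : -(R.xmax - R.center 0) < (R.ymax - R.center 1 - δ) / k := by
      rw [lt_div_iff_of_neg hk]
      linarith
    simp only [Matrix.cons_val_zero]
    linarith
  · have : (R.ymax - R.center 1 - δ) / k < R.xmax - R.center 0 := by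
      rw [div_lt_iff_of_neg hk]
      linarith
    simp only [Matrix.cons_val_zero]
    linarith
  · rw [hL]
    simp only [Matrix.cons_val_zero, Matrix.cons_val_one]
    ring
  · simp
    linarith
  · simp
    linarith
  · rintro q hq ⟨hq0, -, hq1⟩
    rw [hL, hq0, ← neg_sub (R.center 0), mul_neg, hw] at hq
    linarith

theorem lineL1''_meets_AB_BC_general (R : AARect)
    (h4x : 4 ≤ R.xmax - R.xmin) (h4y : 4 ≤ R.ymax - R.ymin)
    (v : Pt) (hv : v 0 * v 1 < 0)
    (a : Pt) (haL : a ∈ lineThrough R.center v)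
    (ha0 : a 0 = R.xmin)
    (haA : dist R.A a < 1)
    (p' : Pt) (hp'dist : dist R.center p' = 2)
    (hp'perp : (inner ℝ (p' - R.center) v : ℝ) = 0)
    (hp'side : p' ∈ rightOf R.center v) :
    (∃ f ∈ lineThrough p' v, f 1 = R.ymax ∧ f 0 ∈ Set.Ioo R.xmin R.xmax) ∧
    (∃ j ∈ lineThrough p' v, j 0 = R.xmax ∧ j 1 ∈ Set.Ioo R.ymin R.ymax) ∧
    (∀ q ∈ lineThrough p' v, ¬(q 0 = R.xmin ∧ q 1 ∈ Set.Icc R.ymin R.ymax)) := by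
  have hv0 : v 0 ≠ 0 := by rintro h; simp [h] at hv
  have hk : v 1 / v 0 < 0 := div_neg_of_mul_neg hv
  set k := v 1 / v 0
  set δ := p' 1 - R.center 1 - k * (p' 0 - R.center 0)
  have hδ : 2 ≤ δ ∧ δ < 2 * (1 - k) :=
    le_and_lt_of_sq_eq_sq_mul_one_add_sq (sub_nonneg.2 (slope_mul_le_of_mem_rightOf hv hp'side))
      two_pos hk (by rw [sq_vertical_offset_of_inner_eq_zero hv0 hp'perp, hp'dist])
  have hL : ∀ q, q ∈ lineThrough p' v ↔ q 1 - R.center 1 = δ + k * (q 0 - R.center 0) := by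
    intro q
    rw [mem_lineThrough_iff hv0]
    constructor <;> intro h <;> linear_combination h
  have ha : a 1 - R.center 1 = k * (R.xmin - R.center 0) := ha0 ▸ (mem_lineThrough_iff hv0).1 haL
  have hAa : dist R.A a = |R.ymax - a 1| := by
    simp [EuclideanSpace.dist_eq, AARect.A, ha0, Real.dist_eq, Real.sqrt_sq_eq_abs]
  refine graph_meets_AB_BC_not_AD R h4x h4y hL hk hδ.1 hδ.2 ?_
  calc |R.ymax - R.center 1 + k * (R.center 0 - R.xmin)| = dist R.A a := by
        rw [hAa]; congr 1; linear_combination ha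
    _ < 1 := haA

/-- Setup: `R = ABCD` is an axis-aligned rectangle with all sides of length at least 4 and
center `p`; `L₁` is the line through `p` with direction `v` of negative slope, meeting
`[AD]` at `a` and `[BC]` at `d`, with `|Aa| < 1`; `p'` is the point at distance 2 from `p`
on the perpendicular to `L₁` through `p`, on the side of `L₁` to the right of `L₁`;
`L₁''` is the line through `p'` parallel to `L₁`. Then `L₁''` meets the interior of the
North side `[AB]` and the interior of the East side `[BC]`, and is disjoint from the West
side `[AD]`. -/
theorem lineL1''_meets_AB_BC (R : AARect)
    (h4x : 4 ≤ R.xmax - R.xmin) (h4y : 4 ≤ R.ymax - R.ymin)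
    (v : Pt) (hv : v 0 * v 1 < 0)
    (a : Pt) (haL : a ∈ lineThrough R.center v)
    (ha0 : a 0 = R.xmin) (ha1 : a 1 ∈ Set.Icc R.ymin R.ymax)
    (haA : dist R.A a < 1)
    (d : Pt) (hdL : d ∈ lineThrough R.center v)
    (hd0 : d 0 = R.xmax) (hd1 : d 1 ∈ Set.Icc R.ymin R.ymax)
    (p' : Pt) (hp'dist : dist R.center p' = 2)
    (hp'perp : (inner ℝ (p' - R.center) v : ℝ) = 0)
    (hp'side : p' ∈ rightOf R.center v) :
    (∃ f ∈ lineThrough p' v, f 1 = R.ymax ∧ f 0 ∈ Set.Ioo R.xmin R.xmax) ∧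
    (∃ j ∈ lineThrough p' v, j 0 = R.xmax ∧ j 1 ∈ Set.Ioo R.ymin R.ymax) ∧
    (∀ q ∈ lineThrough p' v, ¬(q 0 = R.xmin ∧ q 1 ∈ Set.Icc R.ymin R.ymax)) :=
  lineL1''_meets_AB_BC_general R h4x h4y v hv a haL ha0 haA p' hp'dist hp'perp hp'side

end
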